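/- Let N ≥ 2 and K ≥ 1, and let q : (Fin K)^N → ℝ be nonnegative weights with Σ_k q(k) = 1. Define the experimental state |G̃⟩ ∈ ⊗_{i=1}^N ℂ^{2K} by |G̃⟩ = Σ_{k ∈ (Fin K)^N} √(q(k)) · (1/√2)·(⊗_{i=1}^N e_{2k_i} + ⊗_{i=1}^N e_{2k_i+1}), where e_m denotes the standard basis of ℂ^{2K}. For each party let Φᵢ : ℂ^{2K} → ℂ^{2K} ⊗ ℂ² be the linear isometry determined by Φᵢ(e_{2k}) = e_{2k} ⊗ f₀ and Φᵢ(e_{2k+1}) = e_{2k} ⊗ f₁ for 0 ≤ k < K, where f₀, f₁ is the standard basis of ℂ². Then, under the canonical reordering isomorphism ⊗_{i}(ℂ^{2K}⊗ℂ²) ≅ (⊗_i ℂ^{2K}) ⊗ (⊗_i ℂ²), one has (⊗_{i=1}^N Φᵢ)(|G̃⟩) = |junk⟩ ⊗ |GHZ_N⟩, where |junk⟩ = Σ_k √(q(k)) ⊗_{i=1}^N e_{2k_i} and |GHZ_N⟩ = (1/√2)(f₀^{⊗N} + f₁^{⊗N}). -/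
import Mathlib


open Matrix BigOperators Finset

noncomputable section

/-- The matrix entries of the SWAP-type local isometry
`Φᵢ : ℂ^{2K} → ℂ^{2K}⊗ℂ²`, `Φᵢ(e_{2k}) = e_{2k}⊗f₀`, `Φᵢ(e_{2k+1}) = e_{2k}⊗f₁`:
`isoEntry K (m', b) m` is the coefficient of `e_{m'}⊗f_b` in `Φᵢ(e_m)`. -/
def isoEntry (K : ℕ) : Fin (2 * K) × Fin 2 → Fin (2 * K) → ℂ := fun p m =>
  if (p.1 : ℕ) = 2 * ((m : ℕ) / 2) ∧ (p.2 : ℕ) = (m : ℕ) % 2 then 1 else 0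

/-- The experimental state `|G̃⟩ = Σ_k √(q k) (1/√2)(⊗ᵢ e_{2kᵢ} + ⊗ᵢ e_{2kᵢ+1})`
in `⊗ᵢ ℂ^{2K}`, represented on the index set `Fin N → Fin (2K)`. -/
def Gtilde (N K : ℕ) (q : (Fin N → Fin K) → ℝ) : (Fin N → Fin (2 * K)) → ℂ := fun f =>
  ∑ k : Fin N → Fin K, ((Real.sqrt (q k) : ℝ) : ℂ) * ((Real.sqrt 2 : ℝ) : ℂ)⁻¹ *
    ((∏ i, if (f i : ℕ) = 2 * (k i : ℕ) then (1 : ℂ) else 0)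
      + ∏ i, if (f i : ℕ) = 2 * (k i : ℕ) + 1 then (1 : ℂ) else 0)

/-- The junk state `|junk⟩ = Σ_k √(q k) ⊗ᵢ e_{2kᵢ}`. -/
def junk (N K : ℕ) (q : (Fin N → Fin K) → ℝ) : (Fin N → Fin (2 * K)) → ℂ := fun g =>
  ∑ k : Fin N → Fin K, ((Real.sqrt (q k) : ℝ) : ℂ) *
    ∏ i, if (g i : ℕ) = 2 * (k i : ℕ) then (1 : ℂ) else 0

/-- The `N`-qubit GHZ state. -/
def ghz (N : ℕ) : (Fin N → Fin 2) → ℂ := fun f =>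
  if f = (fun _ => 0) then ((Real.sqrt 2 : ℝ) : ℂ)⁻¹
  else if f = (fun _ => 1) then ((Real.sqrt 2 : ℝ) : ℂ)⁻¹ else 0


lemma sum_iso_mul (K : ℕ) (g : Fin (2*K)) (b : Fin 2) (r : ℕ) (hr : r < 2*K) :
    ∑ m : Fin (2*K), isoEntry K (g,b) m * (if (m:ℕ) = r then (1:ℂ) else 0)
      = isoEntry K (g,b) ⟨r,hr⟩ := by
  rw [Finset.sum_eq_single (⟨r,hr⟩ : Fin (2*K))]
  · simp
  · intro m _ hm
    have : (m:ℕ) ≠ r := fun h => hm (Fin.ext h)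
    simp [this]
  · simp

lemma key_sum (N K : ℕ) (g : Fin N → Fin (2*K)) (b : Fin N → Fin 2)
    (k : Fin N → Fin K) (c : Fin 2) :
    ∑ f : Fin N → Fin (2*K), (∏ i, isoEntry K (g i, b i) (f i)) *
      ∏ i, (if (f i:ℕ) = 2*(k i:ℕ) + (c:ℕ) then (1:ℂ) else 0)
    = (∏ i, if (g i:ℕ) = 2*(k i:ℕ) then (1:ℂ) else 0) *
      ∏ i, (if (b i:ℕ) = (c:ℕ) then (1:ℂ) else 0) := by
  simp_rw [← Finset.prod_mul_distrib]
  rw [← Fintype.piFinset_univ, ← Finset.prod_univ_sum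
    (f := fun i m => isoEntry K (g i, b i) m *
      if (m:ℕ) = 2*(k i:ℕ) + (c:ℕ) then (1:ℂ) else 0)]
  refine Finset.prod_congr rfl fun i _ => ?_
  have hlt : 2*(k i:ℕ) + (c:ℕ) < 2*K := by have := (k i).isLt; have := c.isLt; omega
  rw [sum_iso_mul K (g i) (b i) _ hlt]
  have h1 : (2*(k i:ℕ) + (c:ℕ))/2 = (k i:ℕ) := by have := c.isLt; omega
  have h2 : (2*(k i:ℕ) + (c:ℕ))%2 = (c:ℕ) := by have := c.isLt; omega
  by_cases hg : (g i:ℕ) = 2*(k i:ℕ) <;> by_cases hb : (b i:ℕ) = (c:ℕ) <;>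
    simp [isoEntry, h1, h2, hg, hb]

lemma myProdIndicator {N : ℕ} (b : Fin N → Fin 2) (c : Fin 2) :
    (∏ i, if (b i : ℕ) = (c:ℕ) then (1:ℂ) else 0) = if b = (fun _ => c) then 1 else 0 := by
  by_cases h : b = fun _ => c
  · simp [h]
  · rw [if_neg h]
    obtain ⟨i, hi⟩ : ∃ i, b i ≠ c := by
      by_contra hc; push_neg at hc; exact h (funext hc)
    apply Finset.prod_eq_zero (Finset.mem_univ i)
    simp [Fin.val_eq_val, hi]

/-- Self-testing of the state (Appendix B): applying the local isometries
`⊗ᵢ Φᵢ` to the experimental state `|G̃⟩` yields `|junk⟩ ⊗ |GHZ_N⟩`, where the target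
`⊗ᵢ(ℂ^{2K}⊗ℂ²) ≅ (⊗ᵢℂ^{2K})⊗(⊗ᵢℂ²)` is represented on the index set
`(Fin N → Fin (2K)) × (Fin N → Fin 2)`. -/
theorem self_test_state (N K : ℕ) (hN : 2 ≤ N) (hK : 1 ≤ K)
    (q : (Fin N → Fin K) → ℝ) (hq : ∀ k, 0 ≤ q k) (hsum : ∑ k, q k = 1) :
    ∀ (g : Fin N → Fin (2 * K)) (b : Fin N → Fin 2),
      (∑ f : Fin N → Fin (2 * K),
          (∏ i, isoEntry K (g i, b i) (f i)) * Gtilde N K q f)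
        = junk N K q g * ghz N b := by
  intro g b
  have hN1 : 0 < N := by omega
  have hne : b = (fun _ => (0:Fin 2)) → b ≠ fun _ => 1 := by
    intro h0 h1
    have := (congrFun h0 ⟨0,hN1⟩).symm.trans (congrFun h1 ⟨0,hN1⟩)
    simp at this
  have hghz : ghz N b = ((Real.sqrt 2 : ℝ) : ℂ)⁻¹ *
      ((if b = (fun _ => 0) then (1:ℂ) else 0) + (if b = (fun _ => 1) then (1:ℂ) else 0)) := by
    unfold ghz
    by_cases h0 : b = fun _ => 0
    · rw [if_pos h0, if_pos h0, if_neg (hne h0)]; ring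
    · rw [if_neg h0, if_neg h0]
      by_cases h1 : b = fun _ => 1 <;> simp [h1]
  simp only [Gtilde, Finset.mul_sum]
  rw [Finset.sum_comm]
  simp only [junk, Finset.sum_mul]
  refine Finset.sum_congr rfl fun k _ => ?_
  have h0 := key_sum N K g b k 0
  have h1 := key_sum N K g b k 1
  rw [myProdIndicator b 0] at h0
  rw [myProdIndicator b 1] at h1
  simp only [Fin.val_zero, add_zero] at h0
  simp only [Fin.val_one] at h1
  calc (∑ f : Fin N → Fin (2*K), (∏ i, isoEntry K (g i, b i) (f i)) *
          (((Real.sqrt (q k) : ℝ) : ℂ) * ((Real.sqrt 2 : ℝ) : ℂ)⁻¹ *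
            ((∏ i, if (f i : ℕ) = 2 * (k i : ℕ) then (1 : ℂ) else 0)
              + ∏ i, if (f i : ℕ) = 2 * (k i : ℕ) + 1 then (1 : ℂ) else 0)))
      = ((Real.sqrt (q k) : ℝ) : ℂ) * ((Real.sqrt 2 : ℝ) : ℂ)⁻¹ *
          ((∑ f : Fin N → Fin (2*K), (∏ i, isoEntry K (g i, b i) (f i)) *
              ∏ i, (if (f i:ℕ) = 2*(k i:ℕ) then (1:ℂ) else 0))
            + ∑ f : Fin N → Fin (2*K), (∏ i, isoEntry K (g i, b i) (f i)) *
              ∏ i, (if (f i:ℕ) = 2*(k i:ℕ) + 1 then (1:ℂ) else 0)) := by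
        rw [← Finset.sum_add_distrib, Finset.mul_sum]
        exact Finset.sum_congr rfl fun f _ => by ring
    _ = ((Real.sqrt (q k) : ℝ) : ℂ) * ((Real.sqrt 2 : ℝ) : ℂ)⁻¹ *
          ((∏ i, if (g i:ℕ) = 2*(k i:ℕ) then (1:ℂ) else 0) *
              (if b = (fun _ => 0) then (1:ℂ) else 0)
            + (∏ i, if (g i:ℕ) = 2*(k i:ℕ) then (1:ℂ) else 0) *
              (if b = (fun _ => 1) then (1:ℂ) else 0)) := by rw [h0, h1]
    _ = ((Real.sqrt (q k) : ℝ) : ℂ) *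
          (∏ i, if (g i : ℕ) = 2 * (k i : ℕ) then (1 : ℂ) else 0) * ghz N b := by
        rw [hghz]; ring
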